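/- There exists a bottleneck non-crossing matching M of the points such that every diagonal {i,j} ∈ M satisfies τ(i,j) > π/2 for both orientations of the diagonal (i.e., both the turning angle of the arc ⟨i..j⟩ and of the arc ⟨j..i⟩ exceed π/2). -/

import Mathlib

noncomputable section

namespace BNC

/-- The Euclidean plane. -/
abbrev Pt : Type := EuclideanSpace ℝ (Fin 2)

/-- Planar cross product (determinant) of two vectors. -/
def cross (u w : Pt) : ℝ := u 0 * w 1 - u 1 * w 0

/-- `v` lists points in strictly convex position in counterclockwise order:
every point distinct from `v i` and `v (i+1)` lies strictly to the left of the
directed line from `v i` to `v (i+1)`.  (This also forces no three of the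
points to be collinear.) -/
def ConvexCCW {n : ℕ} (v : ZMod n → Pt) : Prop :=
  ∀ i j : ZMod n, j ≠ i → j ≠ i + 1 → 0 < cross (v (i + 1) - v i) (v j - v i)

/-- The cyclic arc of indices `i, i+1, …, j` (mod `n`). -/
def arc {n : ℕ} (i j : ZMod n) : Finset (ZMod n) :=
  Finset.image (fun t : ℕ => i + (t : ZMod n)) (Finset.range ((j - i).val + 1))

/-- The turning angle `τ(i,j)`: the sum over `k ∈ ⟨i+1..j−1⟩` of the unsigned
angle between `v (k+1) − v k` and `v k − v (k−1)`. -/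
def tau {n : ℕ} (v : ZMod n → Pt) (i j : ZMod n) : ℝ :=
  ∑ k ∈ arc (i + 1) (j - 1),
    InnerProductGeometry.angle (v (k + 1) - v k) (v k - v (k - 1))

/-- The length of the segment joining the two points of an unordered pair. -/
def pairDist {n : ℕ} (v : ZMod n → Pt) : Sym2 (ZMod n) → ℝ :=
  Sym2.lift ⟨fun a b => dist (v a) (v b), fun a b => dist_comm (v a) (v b)⟩

/-- The closed segment joining the two points of an unordered pair. -/
def pairSeg {n : ℕ} (v : ZMod n → Pt) : Sym2 (ZMod n) → Set Pt :=
  Sym2.lift ⟨fun a b => segment ℝ (v a) (v b), fun a b => segment_symm ℝ (v a) (v b)⟩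

/-- `M` is a perfect matching of the index set `A`: a set of non-degenerate
unordered pairs of indices from `A` such that every index of `A` belongs to
exactly one pair. -/
def IsMatchingOn {n : ℕ} (A : Set (ZMod n)) (M : Set (Sym2 (ZMod n))) : Prop :=
  (∀ e ∈ M, ¬ e.IsDiag) ∧ (∀ e ∈ M, ∀ k, k ∈ e → k ∈ A) ∧
    (∀ k ∈ A, ∃! e, e ∈ M ∧ k ∈ e)

/-- The closed segments of distinct pairs of `M` are pairwise disjoint. -/
def NonCrossing {n : ℕ} (v : ZMod n → Pt) (M : Set (Sym2 (ZMod n))) : Prop :=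
  ∀ e ∈ M, ∀ e' ∈ M, e ≠ e' → Disjoint (pairSeg v e) (pairSeg v e')

/-- The bottleneck value of a matching: the maximal segment length. -/
def bnM {n : ℕ} (v : ZMod n → Pt) (M : Set (Sym2 (ZMod n))) : ℝ :=
  sSup (pairDist v '' M)

/-- A non-crossing perfect matching of the whole point set. -/
def IsNCMatching {n : ℕ} (v : ZMod n → Pt) (M : Set (Sym2 (ZMod n))) : Prop :=
  IsMatchingOn Set.univ M ∧ NonCrossing v M

/-- A bottleneck matching: a non-crossing matching minimizing the bottleneck value. -/
def IsBottleneck {n : ℕ} (v : ZMod n → Pt) (M : Set (Sym2 (ZMod n))) : Prop :=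
  IsNCMatching v M ∧ ∀ M', IsNCMatching v M' → bnM v M ≤ bnM v M'

/-- A pair is an edge of the full polygon iff it is of the form `{k, k+1}`. -/
def IsPolyEdge {n : ℕ} (e : Sym2 (ZMod n)) : Prop := ∃ k : ZMod n, e = s(k, k + 1)

/-- The diagonals of a matching of the full point set. -/
def fullDiags {n : ℕ} (M : Set (Sym2 (ZMod n))) : Set (Sym2 (ZMod n)) :=
  {e ∈ M | ¬ IsPolyEdge e}

/-- The full polygon: the convex hull of all the points. -/
def fullPoly {n : ℕ} (v : ZMod n → Pt) : Set Pt := convexHull ℝ (Set.range v)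

/-- The interior of the polygon `Poly` minus the union of the segments of the
diagonals from `D`. -/
def regionSpace {n : ℕ} (v : ZMod n → Pt) (Poly : Set Pt) (D : Set (Sym2 (ZMod n))) :
    Set Pt :=
  interior Poly \ ⋃ e ∈ D, pairSeg v e

/-- `R` is a region: the closure of a connected component of the interior of the
polygon minus the union of the diagonal segments. -/
def IsRegion {n : ℕ} (v : ZMod n → Pt) (Poly : Set Pt) (D : Set (Sym2 (ZMod n)))
    (R : Set Pt) : Prop :=
  ∃ x ∈ regionSpace v Poly D, R = closure (connectedComponentIn (regionSpace v Poly D) x)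

/-- The diagonals from `D` whose segment lies on the boundary of `R`. -/
def boundDiags {n : ℕ} (v : ZMod n → Pt) (Poly : Set Pt) (D : Set (Sym2 (ZMod n)))
    (R : Set Pt) : Set (Sym2 (ZMod n)) :=
  {e ∈ D | pairSeg v e ⊆ frontier R}

/-- `R` is a region bounded by exactly `k` diagonals. -/
def KBounded {n : ℕ} (v : ZMod n → Pt) (Poly : Set Pt) (D : Set (Sym2 (ZMod n)))
    (R : Set Pt) (k : ℕ) : Prop :=
  IsRegion v Poly D R ∧ (boundDiags v Poly D R).ncard = k

/-- The graph whose vertices are the diagonals of `D`, two being adjacent iff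
some 2-bounded region has both on its boundary. -/
def cascadeGraph {n : ℕ} (v : ZMod n → Pt) (Poly : Set Pt) (D : Set (Sym2 (ZMod n))) :
    SimpleGraph D where
  Adj a b := a ≠ b ∧ ∃ R : Set Pt, KBounded v Poly D R 2 ∧
      pairSeg v a.1 ⊆ frontier R ∧ pairSeg v b.1 ⊆ frontier R
  symm := by
    refine ⟨?_⟩
    rintro a b ⟨hab, R, h1, h2, h3⟩
    exact ⟨hab.symm, R, h1, h3, h2⟩
  loopless := by exact ⟨by rintro a ⟨h, -⟩; exact h rfl⟩

/-- The number of cascades: the number of connected components of the cascade graph. -/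
def cascadeCount {n : ℕ} (v : ZMod n → Pt) (Poly : Set Pt) (D : Set (Sym2 (ZMod n))) : ℕ :=
  Nat.card (cascadeGraph v Poly D).ConnectedComponent

/-- A pair is a diagonal relative to the arc `⟨i..j⟩` iff it is neither `{i,j}`
nor of the form `{k, k+1}` with both `k` and `k+1` in the arc. -/
def ArcDiag {n : ℕ} (i j : ZMod n) (e : Sym2 (ZMod n)) : Prop :=
  e ≠ s(i, j) ∧ ∀ k : ZMod n, k ∈ arc i j → k + 1 ∈ arc i j → e ≠ s(k, k + 1)

/-- The convex hull of the points of the arc `⟨i..j⟩`. -/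
def arcPoly {n : ℕ} (v : ZMod n → Pt) (i j : ZMod n) : Set Pt :=
  convexHull ℝ (v '' (arc i j : Set (ZMod n)))

/-- The diagonals (relative to the arc `⟨i..j⟩`) of a matching `M`. -/
def arcDiags {n : ℕ} (i j : ZMod n) (M : Set (Sym2 (ZMod n))) : Set (Sym2 (ZMod n)) :=
  {e ∈ M | ArcDiag i j e}

/-- `M` is admissible for the subproblem `Matching(i,j)`: it is a non-crossing
perfect matching of the points of the arc `⟨i..j⟩`, it has at most one cascade,
and any region whose boundary contains the segment `[v i, v j]` has at most one
diagonal of `M` on its boundary. -/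
def Admissible {n : ℕ} (v : ZMod n → Pt) (i j : ZMod n) (M : Set (Sym2 (ZMod n))) : Prop :=
  IsMatchingOn (↑(arc i j)) M ∧ NonCrossing v M ∧
    cascadeCount v (arcPoly v i j) (arcDiags i j M) ≤ 1 ∧
    ∀ R : Set Pt, IsRegion v (arcPoly v i j) (arcDiags i j M) R →
      segment ℝ (v i) (v j) ⊆ frontier R →
      (boundDiags v (arcPoly v i j) (arcDiags i j M) R).ncard ≤ 1

/-- `S i j`: the optimal value of the subproblem `Matching(i,j)`. -/
def S {n : ℕ} (v : ZMod n → Pt) (i j : ZMod n) : ℝ :=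
  sInf (bnM v '' {M | Admissible v i j M})

/-- The pair `(i,j)` is necessary: every admissible matching attaining `S i j`
contains the pair `{i,j}`. -/
def Necessary {n : ℕ} (v : ZMod n → Pt) (i j : ZMod n) : Prop :=
  ∀ M : Set (Sym2 (ZMod n)), Admissible v i j M → bnM v M = S v i j → s(i, j) ∈ M

/-- The closed right side of the directed line from `v i` to `v j`. -/
def rightClosed {n : ℕ} (v : ZMod n → Pt) (i j : ZMod n) : Set Pt :=
  {P : Pt | cross (v j - v i) (P - v i) ≤ 0}

/-- The region `Π⁺(i,j)`. -/
def PiPlus {n : ℕ} (v : ZMod n → Pt) (i j : ZMod n) : Set Pt :=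
  {P ∈ rightClosed v i j |
    Real.pi / 3 ≤ EuclideanGeometry.angle (v i) P (v j) ∧ dist (v i) (v j) ≤ dist P (v i)}

/-- The region `Π⁻(i,j)`. -/
def PiMinus {n : ℕ} (v : ZMod n → Pt) (i j : ZMod n) : Set Pt :=
  {P ∈ rightClosed v i j |
    Real.pi / 3 ≤ EuclideanGeometry.angle (v i) P (v j) ∧ dist (v i) (v j) ≤ dist P (v j)}

/-- `(i,j)` is a feasible pair: the arc `⟨i..j⟩` has an even number of points. -/
def Feasible {n : ℕ} (i j : ZMod n) : Prop := Even (arc i j).card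

/-- `(i,j)` is a diagonal pair (not an edge, not degenerate). -/
def IsDiagPair {n : ℕ} (i j : ZMod n) : Prop := i ≠ j ∧ j ≠ i + 1 ∧ i ≠ j + 1

/-- `(i,j)` is a candidate diagonal: a feasible diagonal that is necessary and
whose turning angle is at most `2π/3`. -/
def Candidate {n : ℕ} (v : ZMod n → Pt) (i j : ZMod n) : Prop :=
  Feasible i j ∧ IsDiagPair i j ∧ Necessary v i j ∧ tau v i j ≤ 2 * Real.pi / 3

/-!
Among the bottleneck matchings take one with the fewest diagonals, and suppose a diagonal
`{i, j}` of it had `τ(i, j) ≤ π / 2`. By the triangle inequality for angles, any two edge vectors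
of the arc `⟨i..j⟩` then make an angle of at most `π / 2`, so their inner products are
nonnegative and each of them is at most as long as their sum `v j - v i`. Since the matching is
non-crossing, every other pair lies entirely inside or entirely outside the arc, so the inner
points are matched among themselves and `⟨i..j⟩` has an even number of points. Replacing `{i, j}`
and the inner pairs by the polygon edges `{i, i+1}, {i+2, i+3}, …, {j-1, j}` yields a
non-crossing matching whose bottleneck is no larger and which has fewer diagonals.
-/

section Orientation

/-- Positive iff `P` lies strictly to the left of the directed line from `A` to `B`. -/
def orient (A B P : Pt) : ℝ := cross (B - A) (P - A)

lemma cross_self (u : Pt) : cross u u = 0 := by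
  simp only [cross]; ring

lemma orient_swap (A B P : Pt) : orient A P B = -orient A B P := by
  simp only [orient, cross, PiLp.sub_apply]; ring

lemma orient_left_self (A B : Pt) : orient A B A = 0 := by
  simp [orient, cross]

lemma orient_right_self (A B : Pt) : orient A B B = 0 :=
  cross_self _

lemma orient_add_smul (A B P Q : Pt) {a b : ℝ} (hab : a + b = 1) :
    orient A B (a • P + b • Q) = a * orient A B P + b * orient A B Q := by
  obtain rfl : b = 1 - a := by linarith
  simp only [orient, cross, PiLp.sub_apply, PiLp.add_apply, PiLp.smul_apply, smul_eq_mul]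
  ring

lemma disjoint_segment_of_orient {A B P Q R S : Pt} (hP : orient A B P ≤ 0)
    (hQ : orient A B Q ≤ 0) (hR : 0 < orient A B R) (hS : 0 < orient A B S) :
    Disjoint (segment ℝ P Q) (segment ℝ R S) := by
  have hPQ : ∀ z ∈ segment ℝ P Q, orient A B z ≤ 0 := by
    rintro z ⟨a, b, ha, hb, hab, rfl⟩
    rw [orient_add_smul A B P Q hab]
    nlinarith
  have hRS : ∀ z ∈ segment ℝ R S, 0 < orient A B z := by
    rintro z ⟨a, b, ha, hb, hab, rfl⟩
    rw [orient_add_smul A B R S hab]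
    rcases ha.eq_or_lt with rfl | ha
    · simp_all
    · exact add_pos_of_pos_of_nonneg (mul_pos ha hR) (mul_nonneg hb hS.le)
  exact Set.disjoint_left.mpr fun z hz hz' => (hPQ z hz).not_gt (hRS z hz')

lemma not_disjoint_segment_of_orient {A B C D : Pt} (hC : orient A B C < 0)
    (hD : 0 < orient A B D) (hA : 0 < orient C D A) (hB : orient C D B < 0) :
    ¬ Disjoint (segment ℝ A B) (segment ℝ C D) := by
  set K := orient C D A - orient C D B
  have hK : K = orient A B D - orient A B C := by
    simp only [K, orient, cross, PiLp.sub_apply]; ring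
  have hK₀ : 0 < K := by linarith
  set s := orient C D A / K
  set t := -orient A B C / K
  have hs : s ∈ Set.Icc (0 : ℝ) 1 :=
    ⟨div_nonneg hA.le hK₀.le, (div_le_one hK₀).mpr (by linarith)⟩
  have ht : t ∈ Set.Icc (0 : ℝ) 1 :=
    ⟨div_nonneg (by linarith) hK₀.le, (div_le_one hK₀).mpr (by linarith)⟩
  have hmeet : (1 - s) • A + s • B = (1 - t) • C + t • D := by
    rw [hK] at hK₀
    simp only [s, t, hK]
    simp only [orient, cross, PiLp.sub_apply] at hK₀ ⊢
    ext k
    fin_cases k <;>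
    · simp only [PiLp.add_apply, PiLp.smul_apply, smul_eq_mul, Fin.zero_eta, Fin.mk_one]
      field_simp
      ring
  rw [Set.not_disjoint_iff]
  exact ⟨_, ⟨1 - s, s, by linarith [hs.2], hs.1, by ring, rfl⟩,
    hmeet ▸ ⟨1 - t, t, by linarith [ht.2], ht.1, by ring, rfl⟩⟩

/-- Transitivity of `0 < cross x y` on the convex cone spanned by `e` and `f`, read off from the
Grassmann–Plücker relations `p₁`, `p₂`, `p₃`. -/
lemma cross_pos_trans {e f u m w : Pt} (hef : 0 < cross e f) (hem : 0 < cross e m)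
    (hmf : 0 < cross m f) (heu : 0 ≤ cross e u) (hwf : 0 ≤ cross w f)
    (hum : 0 < cross u m) (hmw : 0 < cross m w) : 0 < cross u w := by
  have p₁ : cross e f * cross u m = cross e m * cross u f - cross e u * cross m f := by
    simp only [cross]; ring
  have p₂ : cross e f * cross m w = cross e w * cross m f - cross e m * cross w f := by
    simp only [cross]; ring
  have p₃ : cross e f * cross u w = cross e w * cross u f - cross e u * cross w f := by
    simp only [cross]; ring
  have h₁ : cross e u * cross m f < cross e m * cross u f := by nlinarith
  have h₂ : cross e m * cross w f < cross e w * cross m f := by nlinarith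
  have h₃ : (cross e m * cross m f) * (cross e u * cross w f)
      < (cross e m * cross m f) * (cross e w * cross u f) := by
    nlinarith [mul_lt_mul'' h₁ h₂ (mul_nonneg heu hmf.le) (mul_nonneg hem.le hwf)]
  have h₄ := lt_of_mul_lt_mul_left h₃ (mul_pos hem hmf).le
  exact pos_of_mul_pos_right (p₃ ▸ sub_pos.mpr h₄) hef.le

end Orientation

section AngleChain

open InnerProductGeometry
open scoped RealInnerProductSpace

variable {V : Type*} [NormedAddCommGroup V] [InnerProductSpace ℝ V]

lemma inner_nonneg_of_angle_le_pi_div_two {x y : V} (h : angle x y ≤ Real.pi / 2) :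
    0 ≤ ⟪x, y⟫ := by
  rw [← cos_angle_mul_norm_mul_norm]
  exact mul_nonneg (Real.cos_nonneg_of_neg_pi_div_two_le_of_le
    (by linarith [angle_nonneg x y, Real.pi_pos]) h) (by positivity)

lemma angle_le_sum_angle_succ (E : ℕ → V) {u w : ℕ} (h : u < w) :
    angle (E u) (E w) ≤ ∑ t ∈ Finset.Ico u w, angle (E t) (E (t + 1)) := by
  induction w, h using Nat.le_induction with
  | base => simp
  | succ w hw ih =>
    rw [Finset.sum_Ico_succ_top (by omega)]
    linarith [angle_le_angle_add_angle (E u) (E w) (E (w + 1))]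

lemma norm_le_norm_sum_of_sum_angle_le (E : ℕ → V) {m : ℕ}
    (h : ∑ t ∈ Finset.range (m - 1), angle (E t) (E (t + 1)) ≤ Real.pi / 2)
    {u : ℕ} (hu : u < m) : ‖E u‖ ≤ ‖∑ t ∈ Finset.range m, E t‖ := by
  have hangle : ∀ {a b}, a < b → b < m → angle (E a) (E b) ≤ Real.pi / 2 := by
    intro a b hab hb
    refine (angle_le_sum_angle_succ E hab).trans (le_trans ?_ h)
    refine Finset.sum_le_sum_of_subset_of_nonneg (fun t ht => ?_) fun _ _ _ => angle_nonneg _ _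
    simp only [Finset.mem_Ico, Finset.mem_range] at ht ⊢
    omega
  have hinner : ∀ w < m, 0 ≤ ⟪E w, E u⟫ := by
    intro w hw
    rcases lt_trichotomy w u with hwu | rfl | huw
    · exact inner_nonneg_of_angle_le_pi_div_two (hangle hwu hu)
    · exact real_inner_self_nonneg
    · exact real_inner_comm (E w) (E u) ▸ inner_nonneg_of_angle_le_pi_div_two (hangle huw hw)
  have hsq : ‖E u‖ ^ 2 ≤ ‖∑ t ∈ Finset.range m, E t‖ * ‖E u‖ :=
    calc ‖E u‖ ^ 2 = ⟪E u, E u⟫ := (real_inner_self_eq_norm_sq _).symm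
      _ ≤ ∑ w ∈ Finset.range m, ⟪E w, E u⟫ :=
        Finset.single_le_sum (f := fun w => ⟪E w, E u⟫)
          (fun w hw => hinner w (Finset.mem_range.mp hw)) (Finset.mem_range.mpr hu)
      _ = ⟪∑ w ∈ Finset.range m, E w, E u⟫ := (sum_inner _ _ _).symm
      _ ≤ ‖∑ t ∈ Finset.range m, E t‖ * ‖E u‖ := real_inner_le_norm _ _
  nlinarith [norm_nonneg (E u), norm_nonneg (∑ t ∈ Finset.range m, E t)]

end AngleChain

section Offsets

variable {n : ℕ} {i j : ZMod n}

lemma natCast_inj_of_lt {k l : ℕ} (hk : k < n) (hl : l < n) : (k : ZMod n) = l ↔ k = l := by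
  rw [ZMod.natCast_eq_natCast_iff', Nat.mod_eq_of_lt hk, Nat.mod_eq_of_lt hl]

lemma add_natCast_inj (a : ZMod n) {k l : ℕ} (hk : k < n) (hl : l < n) :
    a + k = a + l ↔ k = l :=
  add_right_inj a |>.trans (natCast_inj_of_lt hk hl)

lemma add_natCast_ne_self [NeZero n] (a : ZMod n) {k : ℕ} (h0 : 0 < k) (hk : k < n) :
    a + k ≠ a := by
  simpa using (add_natCast_inj a hk (NeZero.pos n)).not.mpr h0.ne'

lemma add_natCast_succ (a : ZMod n) (k : ℕ) : a + ((k + 1 : ℕ) : ZMod n) = a + k + 1 := by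
  push_cast; ring

lemma add_natCast_pred_add_one [NeZero n] (a : ZMod n) :
    a + ((n - 1 : ℕ) : ZMod n) + 1 = a := by
  rw [add_assoc, ← Nat.cast_add_one, Nat.sub_add_cancel (NeZero.pos n), ZMod.natCast_self,
    add_zero]

lemma add_val_sub [NeZero n] (i k : ZMod n) : i + ((k - i).val : ZMod n) = k := by
  rw [ZMod.natCast_zmod_val]; ring

lemma val_add_natCast_sub (i : ZMod n) {u : ℕ} (hu : u < n) : (i + u - i).val = u := by
  rw [add_sub_cancel_left, ZMod.val_natCast_of_lt hu]

lemma val_sub_eq_zero_iff {k : ZMod n} : (k - i).val = 0 ↔ k = i := by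
  rw [ZMod.val_eq_zero, sub_eq_zero]

lemma val_sub_inj [NeZero n] {k : ZMod n} : (k - i).val = (j - i).val ↔ k = j :=
  ⟨fun h => by rw [← add_val_sub i k, h, add_val_sub], fun h => h ▸ rfl⟩

lemma val_sub_of_mem_pair {k : ZMod n} (hk : k ∈ s(i, j)) :
    (k - i).val = 0 ∨ (k - i).val = (j - i).val := by
  rcases Sym2.mem_iff.mp hk with rfl | rfl
  · exact .inl (val_sub_eq_zero_iff.mpr rfl)
  · exact .inr rfl

lemma two_le_val_sub_of_not_isPolyEdge [NeZero n] (hne : i ≠ j) (hdg : ¬ IsPolyEdge s(i, j)) :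
    2 ≤ (j - i).val ∧ (j - i).val + 2 ≤ n := by
  have hj := add_val_sub i j
  have hm := ZMod.val_lt (j - i)
  have h₀ : (j - i).val ≠ 0 := fun h => hne (val_sub_eq_zero_iff.mp h).symm
  have h₁ : (j - i).val ≠ 1 := fun h => hdg ⟨i, by rw [← hj, h, Nat.cast_one]⟩
  have h₂ : (j - i).val ≠ n - 1 := fun h =>
    hdg ⟨j, by rw [Sym2.eq_swap, ← hj, h, add_natCast_pred_add_one]⟩
  omega

end Offsets

section ConvexPosition

variable {n : ℕ} [NeZero n] {v : ZMod n → Pt} {i j : ZMod n}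

theorem ConvexCCW.orient_pos (hv : ConvexCCW v) (a : ZMod n) {s t : ℕ} (hs : 0 < s)
    (hst : s < t) (ht : t < n) : 0 < orient (v a) (v (a + s)) (v (a + t)) := by
  set x : ℕ → Pt := fun k => v (a + k) - v a
  change 0 < cross (x s) (x t)
  have hsucc : ∀ k, 0 < k → k + 1 < n → 0 < cross (x k) (x (k + 1)) := by
    intro k hk hkn
    have h := hv (a + k) a (add_natCast_ne_self a hk (by omega)).symm
      (by rw [← add_natCast_succ]; exact (add_natCast_ne_self a (by omega) hkn).symm)
    rw [← add_natCast_succ] at h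
    simp only [x, cross, PiLp.sub_apply] at h ⊢
    linarith
  have hfirst : ∀ k, 1 < k → k < n → 0 < cross (x 1) (x k) := by
    intro k hk hkn
    have h := hv a (a + k) (add_natCast_ne_self a (by omega) hkn)
      (by simpa using (add_natCast_inj a hkn (show 1 < n by omega)).not.mpr hk.ne')
    simpa [x] using h
  have hlast : ∀ k, 0 < k → k < n - 1 → 0 < cross (x k) (x (n - 1)) := by
    intro k hk hkn
    have h := hv (a + ((n - 1 : ℕ) : ZMod n)) (a + k)
      ((add_natCast_inj a (by omega) (by omega)).not.mpr (by omega))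
      (by rw [add_natCast_pred_add_one]; exact add_natCast_ne_self a hk (by omega))
    rw [add_natCast_pred_add_one] at h
    simp only [x, cross, PiLp.sub_apply] at h ⊢
    linarith
  -- by `hfirst` and `hlast`, every `x k` lies in the cone spanned by `x 1` and `x (n - 1)`
  induction t, hst using Nat.le_induction with
  | base => exact hsucc s hs ht
  | succ t hst ih =>
    have hef := hfirst (n - 1) (by omega) (by omega)
    have hem := hfirst t (by omega) (by omega)
    have hmf := hlast t (by omega) (by omega)
    have heu : 0 ≤ cross (x 1) (x s) := by
      rcases (Nat.one_le_iff_ne_zero.mpr hs.ne').eq_or_lt with rfl | h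
      · exact (cross_self _).ge
      · exact (hfirst s h (by omega)).le
    have hwf : 0 ≤ cross (x (t + 1)) (x (n - 1)) := by
      rcases (show t + 1 ≤ n - 1 by omega).eq_or_lt with h | h
      · rw [h]; exact (cross_self _).ge
      · exact (hlast (t + 1) (by omega) h).le
    exact cross_pos_trans hef hem hmf heu hwf (ih (by omega)) (hsucc t (by omega) ht)

lemma ConvexCCW.orient_nonpos (hv : ConvexCCW v) (i : ZMod n) {u m : ℕ} (hu : u ≤ m)
    (hm : m < n) : orient (v i) (v (i + m)) (v (i + u)) ≤ 0 := by
  rcases Nat.eq_zero_or_pos u with rfl | hu₀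
  · simpa using (orient_left_self _ _).le
  rcases hu.eq_or_lt with rfl | hum
  · exact (orient_right_self _ _).le
  rw [orient_swap]
  linarith [hv.orient_pos i hu₀ hum hm]

lemma ConvexCCW.orient_pos_of_val_sub (hv : ConvexCCW v) {i k : ZMod n} {m : ℕ} (hm : 0 < m)
    (hmk : m < (k - i).val) : 0 < orient (v i) (v (i + m)) (v k) := by
  simpa only [add_val_sub] using hv.orient_pos i hm hmk (ZMod.val_lt _)

lemma ConvexCCW.not_disjoint_segment (hv : ConvexCCW v) {a k : ZMod n}
    (ha₀ : 0 < (a - i).val) (haj : (a - i).val < (j - i).val) (hjk : (j - i).val < (k - i).val) :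
    ¬ Disjoint (segment ℝ (v i) (v j)) (segment ℝ (v a) (v k)) := by
  set s := (a - i).val
  set t := (j - i).val
  set r := (k - i).val
  have hr : r < n := ZMod.val_lt _
  have ha : i + (s : ZMod n) + ((n - s : ℕ) : ZMod n) = i := by
    rw [Nat.cast_sub (show s ≤ n by omega), ZMod.natCast_self]; ring
  have hshift : ∀ u, s ≤ u → i + (u : ZMod n) = i + (s : ZMod n) + ((u - s : ℕ) : ZMod n) := by
    intro u hu; rw [Nat.cast_sub hu]; ring
  refine not_disjoint_segment_of_orient (C := v a) (D := v k) ?_ ?_ ?_ ?_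
  · rw [← add_val_sub i a, ← add_val_sub i j, orient_swap]
    linarith [hv.orient_pos i ha₀ haj (ZMod.val_lt _)]
  · exact add_val_sub i j ▸ hv.orient_pos_of_val_sub (ha₀.trans haj) hjk
  · have h := hv.orient_pos (i + s) (show 0 < r - s by omega) (show r - s < n - s by omega)
      (by omega)
    rwa [← hshift r (by omega), ha, add_val_sub, add_val_sub] at h
  · rw [← add_val_sub i a, ← add_val_sub i k, ← add_val_sub i j, hshift r (by omega),
      hshift t (by omega), orient_swap]
    linarith [hv.orient_pos (i + s) (show 0 < t - s by omega) (show t - s < r - s by omega)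
      (by omega)]

end ConvexPosition

section TurningAngle

open InnerProductGeometry

variable {n : ℕ}

lemma tau_add_natCast (v : ZMod n → Pt) (i : ZMod n) {m : ℕ} (hm : 2 ≤ m) (hmn : m < n) :
    tau v i (i + m) = ∑ t ∈ Finset.range (m - 1),
      angle (v (i + (t + 1 : ℕ)) - v (i + t)) (v (i + (t + 2 : ℕ)) - v (i + (t + 1 : ℕ))) := by
  have hlen : (i + m - 1 - (i + 1)).val + 1 = m - 1 := by
    rw [show i + m - 1 - (i + 1) = ((m - 2 : ℕ) : ZMod n) by push_cast [Nat.cast_sub hm]; ring,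
      ZMod.val_natCast_of_lt (by omega)]
    omega
  rw [tau, arc, hlen, Finset.sum_image fun t ht t' ht' h =>
    (add_natCast_inj (i + 1) (by simp at ht; omega) (by simp at ht'; omega)).mp h]
  refine Finset.sum_congr rfl fun t _ => ?_
  rw [angle_comm]
  congr 3 <;> push_cast <;> ring

lemma dist_le_of_tau_le [NeZero n] {v : ZMod n → Pt} {i : ZMod n} {m : ℕ} (hm : 2 ≤ m)
    (hmn : m < n) (hτ : tau v i (i + m) ≤ Real.pi / 2) {u : ℕ} (hu : u < m) :
    dist (v (i + u)) (v (i + (u + 1 : ℕ))) ≤ dist (v i) (v (i + m)) := by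
  set E : ℕ → Pt := fun t => v (i + (t + 1 : ℕ)) - v (i + t)
  have hsum : ∑ t ∈ Finset.range m, E t = v (i + m) - v i :=
    (Finset.sum_range_sub (fun t : ℕ => v (i + t)) m).trans (by simp)
  have h := norm_le_norm_sum_of_sum_angle_le E (by rwa [← tau_add_natCast v i hm hmn]) hu
  rwa [hsum, ← dist_eq_norm, ← dist_eq_norm, dist_comm, dist_comm (v (i + m))] at h

end TurningAngle

section Matching

variable {n : ℕ} {v : ZMod n → Pt} {A B : Set (ZMod n)} {M M₁ M₂ : Set (Sym2 (ZMod n))}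

lemma IsMatchingOn.eq_of_mem (hM : IsMatchingOn A M) {k : ZMod n} (hk : k ∈ A)
    {e e' : Sym2 (ZMod n)} (he : e ∈ M) (he' : e' ∈ M) (hke : k ∈ e) (hke' : k ∈ e') :
    e = e' :=
  (hM.2.2 k hk).unique ⟨he, hke⟩ ⟨he', hke'⟩

lemma IsMatchingOn.union (h₁ : IsMatchingOn A M₁) (h₂ : IsMatchingOn B M₂)
    (hAB : Disjoint A B) : IsMatchingOn (A ∪ B) (M₁ ∪ M₂) := by
  refine ⟨fun e he => he.elim (h₁.1 e) (h₂.1 e), fun e he k hk => ?_, fun k hk => ?_⟩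
  · exact he.elim (fun he => .inl (h₁.2.1 e he k hk)) (fun he => .inr (h₂.2.1 e he k hk))
  rcases hk with hk | hk
  · obtain ⟨e, ⟨he, hke⟩, huniq⟩ := h₁.2.2 k hk
    refine ⟨e, ⟨.inl he, hke⟩, fun e' ⟨he', hke'⟩ => he'.elim (fun he' => huniq e' ⟨he', hke'⟩)
      fun he' => (Set.disjoint_left.mp hAB hk (h₂.2.1 e' he' k hke')).elim⟩
  · obtain ⟨e, ⟨he, hke⟩, huniq⟩ := h₂.2.2 k hk
    refine ⟨e, ⟨.inr he, hke⟩, fun e' ⟨he', hke'⟩ => he'.elim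
      (fun he' => (Set.disjoint_left.mp hAB (h₁.2.1 e' he' k hke') hk).elim)
      fun he' => huniq e' ⟨he', hke'⟩⟩

lemma IsMatchingOn.sep (hM : IsMatchingOn A M)
    (hB : ∀ e ∈ M, ∀ k ∈ e, k ∈ B → ∀ k' ∈ e, k' ∈ B) :
    IsMatchingOn (A ∩ B) {e ∈ M | ∀ k ∈ e, k ∈ B} := by
  refine ⟨fun e he => hM.1 e he.1, fun e he k hk => ⟨hM.2.1 e he.1 k hk, he.2 k hk⟩,
    fun k hk => ?_⟩
  obtain ⟨e, ⟨he, hke⟩, huniq⟩ := hM.2.2 k hk.1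
  exact ⟨e, ⟨⟨he, hB e he k hke hk.2⟩, hke⟩, fun e' ⟨he', hke'⟩ => huniq e' ⟨he'.1, hke'⟩⟩

lemma IsMatchingOn.even_card [NeZero n] {A : Finset (ZMod n)} (hM : IsMatchingOn (↑A) M) :
    Even A.card := by
  classical
  set F := (Set.toFinite M).toFinset
  have hA : A = F.biUnion Sym2.toFinset := by
    ext k
    simp only [Finset.mem_biUnion, Sym2.mem_toFinset, F, Set.Finite.mem_toFinset]
    exact ⟨fun hk => (hM.2.2 k hk).exists, fun ⟨e, he, hke⟩ => hM.2.1 e he k hke⟩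
  have hdisj : (F : Set (Sym2 (ZMod n))).PairwiseDisjoint Sym2.toFinset := by
    intro e he e' he' hne
    refine Finset.disjoint_left.mpr fun k hk hk' => hne ?_
    simp only [F, Set.Finite.coe_toFinset, Sym2.mem_toFinset] at he he' hk hk'
    exact hM.eq_of_mem (hM.2.1 e he k hk) he he' hk hk'
  rw [hA, Finset.card_biUnion hdisj, Finset.sum_congr rfl fun e he =>
    Sym2.card_toFinset_of_not_isDiag e (hM.1 e (by simpa [F] using he))]
  simp

lemma NonCrossing.mono (hM : NonCrossing v M) (h : M₁ ⊆ M) : NonCrossing v M₁ :=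
  fun e he e' he' => hM e (h he) e' (h he')

lemma NonCrossing.union (h₁ : NonCrossing v M₁) (h₂ : NonCrossing v M₂)
    (h : ∀ e ∈ M₁, ∀ e' ∈ M₂, Disjoint (pairSeg v e) (pairSeg v e')) :
    NonCrossing v (M₁ ∪ M₂) := by
  rintro e (he | he) e' (he' | he') hne
  · exact h₁ e he e' he' hne
  · exact h e he e' he'
  · exact (h e' he' e he).symm
  · exact h₂ e he e' he' hne

lemma pairDist_le_bnM [NeZero n] {e : Sym2 (ZMod n)} (he : e ∈ M) :
    pairDist v e ≤ bnM v M :=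
  le_csSup ((Set.toFinite M).image _).bddAbove ⟨e, he, rfl⟩

lemma bnM_le {c : ℝ} (hc : 0 ≤ c) (h : ∀ e ∈ M, pairDist v e ≤ c) : bnM v M ≤ c :=
  Real.sSup_le (by rintro x ⟨e, he, rfl⟩; exact h e he) hc

end Matching

section ConsecutivePairs

variable {n : ℕ} {v : ZMod n → Pt}

def consecPairs (i : ZMod n) (m : ℕ) : Set (Sym2 (ZMod n)) :=
  {e | ∃ t, 2 * t + 1 ≤ m ∧ e = s(i + (2 * t : ℕ), i + (2 * t : ℕ) + 1)}

lemma isPolyEdge_of_mem_consecPairs {i : ZMod n} {m : ℕ} {e : Sym2 (ZMod n)}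
    (he : e ∈ consecPairs i m) : IsPolyEdge e := by
  obtain ⟨t, -, rfl⟩ := he
  exact ⟨_, rfl⟩

lemma consecPairs_isMatchingOn [NeZero n] (i : ZMod n) {m : ℕ} (hm : m < n) (hodd : Odd m) :
    IsMatchingOn {k | (k - i).val ≤ m} (consecPairs i m) := by
  refine ⟨?_, ?_, fun k hk => ?_⟩
  · rintro e ⟨t, ht, rfl⟩
    rw [Sym2.mk_isDiag_iff, ← add_natCast_succ]
    exact (add_natCast_inj i (by omega) (by omega)).not.mpr (by omega)
  · rintro e ⟨t, ht, rfl⟩ k hk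
    rw [← add_natCast_succ] at hk
    show (k - i).val ≤ m
    rcases Sym2.mem_iff.mp hk with rfl | rfl
    · rw [val_add_natCast_sub i (show 2 * t < n by omega)]; omega
    · rw [val_add_natCast_sub i (show 2 * t + 1 < n by omega)]; omega
  · obtain ⟨r, hr⟩ := hodd
    have hku := add_val_sub i k
    set u := (k - i).val
    replace hk : u ≤ m := hk
    refine ⟨_, ⟨⟨u / 2, by omega, rfl⟩, ?_⟩, ?_⟩
    · rw [← add_natCast_succ, Sym2.mem_iff, ← hku]
      rcases Nat.even_or_odd' u with ⟨w, hw | hw⟩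
      · exact .inl (by rw [hw, Nat.mul_div_cancel_left w two_pos])
      · exact .inr (by congr 2; omega)
    · rintro e ⟨⟨t, ht, rfl⟩, hke⟩
      rw [← add_natCast_succ, Sym2.mem_iff, ← hku] at hke
      have hu : u < n := ZMod.val_lt _
      rcases hke with h | h <;>
        have := (add_natCast_inj i hu (by omega)).mp h <;>
        congr <;> omega

lemma consecPairs_nonCrossing (hv : ConvexCCW v) (i : ZMod n) {m : ℕ} (hm : m < n) :
    NonCrossing v (consecPairs i m) := by
  rintro e ⟨t, ht, rfl⟩ e' ⟨r, hr, rfl⟩ hne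
  have hrt : r ≠ t := by rintro rfl; exact hne rfl
  set k := i + ((2 * t : ℕ) : ZMod n)
  have hleft : ∀ w : ℕ, w < n → w ≠ 2 * t → w ≠ 2 * t + 1 →
      0 < orient (v k) (v (k + 1)) (v (i + w)) := by
    intro w hw hw₁ hw₂
    refine hv k _ ((add_natCast_inj i hw (by omega)).not.mpr hw₁) ?_
    rw [← add_natCast_succ]
    exact (add_natCast_inj i hw (by omega)).not.mpr hw₂
  show Disjoint (segment ℝ (v k) (v (k + 1)))
    (segment ℝ (v (i + (2 * r : ℕ))) (v (i + (2 * r : ℕ) + 1)))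
  rw [← add_natCast_succ i (2 * r)]
  exact disjoint_segment_of_orient (orient_left_self _ _).le (orient_right_self _ _).le
    (hleft _ (by omega) (by omega) (by omega)) (hleft _ (by omega) (by omega) (by omega))

end ConsecutivePairs

section Diagonal

variable {n : ℕ} [NeZero n] {v : ZMod n → Pt} {M : Set (Sym2 (ZMod n))} {i j : ZMod n}

theorem ConvexCCW.inside_or_outside (hv : ConvexCCW v) (hM : IsNCMatching v M)
    (hij : s(i, j) ∈ M) {e : Sym2 (ZMod n)} (he : e ∈ M) (hne : e ≠ s(i, j)) :
    (∀ k ∈ e, 0 < (k - i).val ∧ (k - i).val < (j - i).val) ∨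
      ∀ k ∈ e, (j - i).val < (k - i).val := by
  have hend : ∀ k ∈ e, (k - i).val ≠ 0 ∧ (k - i).val ≠ (j - i).val := by
    refine fun k hk => ⟨fun h => hne ?_, fun h => hne ?_⟩
    · exact hM.1.eq_of_mem trivial he hij hk (val_sub_eq_zero_iff.mp h ▸ Sym2.mem_mk_left i j)
    · exact hM.1.eq_of_mem trivial he hij hk (val_sub_inj.mp h ▸ Sym2.mem_mk_right i j)
  have hcross : ∀ a ∈ e, ∀ k ∈ e, (a - i).val < (j - i).val → (j - i).val < (k - i).val →
      False := by
    intro a ha k hk haj hjk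
    have hak : e = s(a, k) := by
      refine (Sym2.mem_and_mem_iff fun h => ?_).mp ⟨ha, hk⟩
      exact hjk.not_gt (h ▸ haj)
    have hdisj := hM.2 _ hij _ he (Ne.symm hne)
    rw [hak] at hdisj
    exact hv.not_disjoint_segment (Nat.pos_of_ne_zero (hend a ha).1) haj hjk hdisj
  by_cases h : ∃ k ∈ e, (j - i).val < (k - i).val
  · obtain ⟨k, hk, hjk⟩ := h
    refine .inr fun a ha => (lt_or_gt_of_ne (hend a ha).2).resolve_left fun haj => ?_
    exact hcross a ha k hk haj hjk
  · push Not at h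
    exact .inl fun k hk => ⟨Nat.pos_of_ne_zero (hend k hk).1,
      lt_of_le_of_ne (h k hk) (hend k hk).2⟩

lemma ConvexCCW.isMatchingOn_inside (hv : ConvexCCW v) (hM : IsNCMatching v M)
    (hij : s(i, j) ∈ M) :
    IsMatchingOn {k | 0 < (k - i).val ∧ (k - i).val < (j - i).val}
      {e ∈ M | ∀ k ∈ e, 0 < (k - i).val ∧ (k - i).val < (j - i).val} := by
  rw [← Set.univ_inter {k | _}]
  refine hM.1.sep fun e he k hk hkB => ?_
  simp only [Set.mem_ofPred_eq] at hkB
  rcases eq_or_ne e s(i, j) with rfl | hne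
  · have := val_sub_of_mem_pair hk
    omega
  · exact (hv.inside_or_outside hM hij he hne).resolve_right fun h => by
      have := h k hk; omega

lemma ConvexCCW.isMatchingOn_outside (hv : ConvexCCW v) (hM : IsNCMatching v M)
    (hij : s(i, j) ∈ M) :
    IsMatchingOn {k | (j - i).val < (k - i).val}
      {e ∈ M | ∀ k ∈ e, (j - i).val < (k - i).val} := by
  rw [← Set.univ_inter {k | _}]
  refine hM.1.sep fun e he k hk hkB => ?_
  simp only [Set.mem_ofPred_eq] at hkB
  rcases eq_or_ne e s(i, j) with rfl | hne
  · have := val_sub_of_mem_pair hk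
    omega
  · exact (hv.inside_or_outside hM hij he hne).resolve_left fun h => by
      have := h k hk; omega

lemma ConvexCCW.odd_val_sub (hv : ConvexCCW v) (hM : IsNCMatching v M) (hij : s(i, j) ∈ M)
    (hne : i ≠ j) : Odd (j - i).val := by
  set m := (j - i).val
  have hm : m < n := ZMod.val_lt _
  have hm₀ : m ≠ 0 := fun h => hne (val_sub_eq_zero_iff.mp h).symm
  set A := (Finset.Ico 1 m).image fun u : ℕ => i + u
  have hA : (A : Set (ZMod n)) = {k | 0 < (k - i).val ∧ (k - i).val < m} := by
    ext k
    simp only [A, Finset.coe_image, Finset.coe_Ico, Set.mem_image, Set.mem_Ico,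
      Set.mem_ofPred_eq]
    constructor
    · rintro ⟨u, hu, rfl⟩
      rw [val_add_natCast_sub i (by omega)]
      omega
    · exact fun hk => ⟨(k - i).val, by omega, add_val_sub i k⟩
  have hcard : A.card = m - 1 := by
    rw [Finset.card_image_of_injOn fun u hu u' hu' h => ?_, Nat.card_Ico]
    simp only [Finset.coe_Ico, Set.mem_Ico] at hu hu'
    exact (add_natCast_inj i (by omega) (by omega)).mp h
  obtain ⟨r, hr⟩ := (hA ▸ hv.isMatchingOn_inside hM hij).even_card
  exact ⟨r, by omega⟩

lemma ConvexCCW.isNCMatching_consecPairs_union (hv : ConvexCCW v) (hM : IsNCMatching v M)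
    (hij : s(i, j) ∈ M) (hm : 2 ≤ (j - i).val) :
    IsNCMatching v
      (consecPairs i (j - i).val ∪ {e ∈ M | ∀ k ∈ e, (j - i).val < (k - i).val}) := by
  have hne : i ≠ j := by rintro rfl; simp at hm
  set m := (j - i).val
  have hmn : m < n := ZMod.val_lt _
  refine ⟨?_, ?_⟩
  · have h := (consecPairs_isMatchingOn i hmn (hv.odd_val_sub hM hij hne)).union
      (hv.isMatchingOn_outside hM hij)
      (Set.disjoint_left.mpr fun k h₁ h₂ => (Nat.lt_irrefl _ (lt_of_lt_of_le h₂ h₁)))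
    rwa [← Set.ofPred_or, Set.eq_univ_of_forall fun k => le_or_gt (k - i).val m] at h
  · refine (consecPairs_nonCrossing hv i hmn).union (hM.2.mono fun e he => he.1) ?_
    rintro _ ⟨t, ht, rfl⟩ e ⟨-, he⟩
    induction e using Sym2.ind with
    | _ c d =>
      have hpos : ∀ k ∈ s(c, d), 0 < orient (v i) (v (i + m)) (v k) :=
        fun k hk => hv.orient_pos_of_val_sub (by omega) (he k hk)
      rw [pairSeg, Sym2.lift_mk, ← add_natCast_succ]
      exact disjoint_segment_of_orient (hv.orient_nonpos i (by omega) hmn)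
        (hv.orient_nonpos i (by omega) hmn) (hpos c (Sym2.mem_mk_left c d))
        (hpos d (Sym2.mem_mk_right c d))

theorem ConvexCCW.exists_isBottleneck_ncard_fullDiags_lt (hv : ConvexCCW v)
    (hM : IsBottleneck v M) (hij : s(i, j) ∈ M) (hdg : ¬ IsPolyEdge s(i, j))
    (hτ : tau v i j ≤ Real.pi / 2) :
    ∃ M', IsBottleneck v M' ∧ (fullDiags M').ncard < (fullDiags M).ncard := by
  have hne : i ≠ j := fun h => hM.1.1.1 _ hij (Sym2.mk_isDiag_iff.mpr h)
  obtain ⟨hm, hmn⟩ := two_le_val_sub_of_not_isPolyEdge hne hdg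
  set m := (j - i).val
  set M' := consecPairs i m ∪ {e ∈ M | ∀ k ∈ e, m < (k - i).val}
  have hdiag : pairDist v s(i, j) ≤ bnM v M := pairDist_le_bnM hij
  have hbn : bnM v M' ≤ bnM v M := by
    refine bnM_le ((dist_nonneg : 0 ≤ dist (v i) (v j)).trans hdiag) ?_
    rintro e (⟨t, ht, rfl⟩ | he)
    · have h := dist_le_of_tau_le (v := v) (i := i) (u := 2 * t) hm (by omega)
        (by rwa [add_val_sub]) (by omega)
      rw [add_natCast_succ, add_val_sub] at h
      exact h.trans hdiag
    · exact pairDist_le_bnM he.1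
  have hsub : fullDiags M' ⊆ fullDiags M \ {s(i, j)} := by
    rintro e ⟨he | he, hpe⟩
    · exact (hpe (isPolyEdge_of_mem_consecPairs he)).elim
    · refine ⟨⟨he.1, hpe⟩, fun h => ?_⟩
      have := he.2 i (Set.mem_singleton_iff.mp h ▸ Sym2.mem_mk_left i j)
      simp at this
  refine ⟨M', ⟨hv.isNCMatching_consecPairs_union hM.1 hij hm,
    fun M'' h'' => hbn.trans (hM.2 M'' h'')⟩, Set.ncard_lt_ncard ?_ (Set.toFinite _)⟩
  exact hsub.trans_ssubset (Set.sdiff_singleton_ssubset.mpr ⟨hij, hdg⟩)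

theorem ConvexCCW.pi_div_two_lt_tau (hv : ConvexCCW v) (hM : IsBottleneck v M)
    (hmin : ∀ M', IsBottleneck v M' → (fullDiags M).ncard ≤ (fullDiags M').ncard)
    (hij : s(i, j) ∈ M) (hdg : ¬ IsPolyEdge s(i, j)) : Real.pi / 2 < tau v i j := by
  by_contra! hτ
  obtain ⟨M', hM', hlt⟩ := hv.exists_isBottleneck_ncard_fullDiags_lt hM hij hdg hτ
  exact (hmin M' hM').not_gt hlt

theorem ConvexCCW.exists_isNCMatching (hv : ConvexCCW v) (hn : Even n) :
    ∃ M, IsNCMatching v M := by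
  have hpos := NeZero.pos n
  have h := consecPairs_isMatchingOn (0 : ZMod n) (m := n - 1) (by omega)
    (by obtain ⟨r, hr⟩ := hn; exact ⟨r - 1, by omega⟩)
  have huniv : {k : ZMod n | (k - 0).val ≤ n - 1} = Set.univ :=
    Set.eq_univ_of_forall fun k => Nat.le_sub_one_of_lt (ZMod.val_lt _)
  rw [huniv] at h
  exact ⟨_, h, consecPairs_nonCrossing hv 0 (by omega)⟩

end Diagonal

end BNC

theorem stmt0_general (n : ℕ) [NeZero n] (hEven : Even n)
    (v : ZMod n → BNC.Pt) (hv : BNC.ConvexCCW v) :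
    ∃ M : Set (Sym2 (ZMod n)), BNC.IsBottleneck v M ∧
      ∀ i j : ZMod n, s(i, j) ∈ M → ¬ BNC.IsPolyEdge s(i, j) →
        Real.pi / 2 < BNC.tau v i j ∧ Real.pi / 2 < BNC.tau v j i := by
  obtain ⟨M₀, hM₀⟩ := hv.exists_isNCMatching hEven
  obtain ⟨M₁, hM₁, hbn⟩ :=
    Set.exists_min_image {M | BNC.IsNCMatching v M} (BNC.bnM v) (Set.toFinite _) ⟨M₀, hM₀⟩
  obtain ⟨M, hM, hmin⟩ := Set.exists_min_image {M | BNC.IsBottleneck v M}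
    (fun M => (BNC.fullDiags M).ncard) (Set.toFinite _) ⟨M₁, hM₁, hbn⟩
  refine ⟨M, hM, fun i j hij hdg => ⟨hv.pi_div_two_lt_tau hM hmin hij hdg, ?_⟩⟩
  rw [Sym2.eq_swap] at hij hdg
  exact hv.pi_div_two_lt_tau hM hmin hij hdg

/-- There is a bottleneck non-crossing matching `M` such that every diagonal
`{i,j} ∈ M` has turning angle exceeding `π/2` in both orientations. -/
theorem stmt0 (n : ℕ) [NeZero n] (hn : 4 ≤ n) (hEven : Even n)
    (v : ZMod n → BNC.Pt) (hv : BNC.ConvexCCW v) :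
    ∃ M : Set (Sym2 (ZMod n)), BNC.IsBottleneck v M ∧
      ∀ i j : ZMod n, s(i, j) ∈ M → ¬ BNC.IsPolyEdge s(i, j) →
        Real.pi / 2 < BNC.tau v i j ∧ Real.pi / 2 < BNC.tau v j i :=
  stmt0_general n hEven v hv
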